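/- arXiv:2508.17052 — 6 statements merged into one kernel-verified Lean document; each statement's English description precedes it below -/
import Mathlib

section
/- Let F be a real generating cone in a vector space V, let n be a norm on V, and let ñ(x) = inf { n(u) + n(v) : u, v ∈ F, x = u − v }. If F has nonempty interior with respect to the topology of n, then the norms n and ñ are equivalent on V: n(x) ≤ ñ(x) for all x, and there exists K > 0 such that ñ(x) ≤ K n(x) for all x ∈ V. Explicitly, if the n-ball B_δ(s) ⊆ F, one may take K = 2n(s)/δ + 1. -/
/-!
Writing `x = r • s - r • (s - r⁻¹ • x)` exhibits `x` as a difference of two elements of `F`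
as soon as `n x < r δ`, because then `s - r⁻¹ • x` lies in the ball `B_δ(s) ⊆ F`. The cost of
this decomposition is at most `2 r n(s) + n(x)`, and letting `r` decrease to `n(x) / δ` gives
`ñ(x) ≤ (2 n(s) / δ + 1) n(x)`. The reverse inequality `n ≤ ñ` is the triangle inequality.
-/

/-- The extension `ñ(x) = inf { n(u) + n(v) : u, v ∈ F, x = u - v }` of a norm `n`
along a generating cone `F`. -/
noncomputable def extNorm {V : Type*} [AddCommGroup V] (n : V → ℝ) (F : Set V) (x : V) : ℝ :=
  sInf {r : ℝ | ∃ u ∈ F, ∃ v ∈ F, x = u - v ∧ r = n u + n v}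

open Filter Topology

section

variable {V : Type*} [AddCommGroup V] {n : V → ℝ} {F : Set V} {x : V}

theorem extNorm_le_add (hn_nonneg : ∀ x, 0 ≤ n x) {u v : V} (hu : u ∈ F) (hv : v ∈ F)
    (hx : x = u - v) : extNorm n F x ≤ n u + n v := by
  refine csInf_le ⟨0, ?_⟩ ⟨u, hu, v, hv, hx, rfl⟩
  rintro _ ⟨u', -, v', -, -, rfl⟩
  exact add_nonneg (hn_nonneg u') (hn_nonneg v')

theorem le_extNorm (hn_sub : ∀ u v, n (u - v) ≤ n u + n v) (hx : ∃ u ∈ F, ∃ v ∈ F, x = u - v) :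
    n x ≤ extNorm n F x := by
  obtain ⟨u, hu, v, hv, hx⟩ := hx
  refine le_csInf ⟨_, u, hu, v, hv, hx, rfl⟩ ?_
  rintro _ ⟨u', -, v', -, rfl, rfl⟩
  exact hn_sub u' v'

variable [Module ℝ V]

theorem apply_sub_le_add (hn_hom : ∀ (a : ℝ) (x : V), n (a • x) = |a| * n x)
    (hn_tri : ∀ x y : V, n (x + y) ≤ n x + n y) (u v : V) : n (u - v) ≤ n u + n v :=
  calc n (u - v) = n (u + (-1 : ℝ) • v) := by rw [neg_one_smul, sub_eq_add_neg]
    _ ≤ n u + n ((-1 : ℝ) • v) := hn_tri _ _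
    _ = n u + n v := by rw [hn_hom, abs_neg, abs_one, one_mul]

theorem extNorm_le_of_ball_subset (hn_nonneg : ∀ x, 0 ≤ n x)
    (hn_hom : ∀ (a : ℝ) (x : V), n (a • x) = |a| * n x)
    (hn_tri : ∀ x y : V, n (x + y) ≤ n x + n y)
    (hF_smul : ∀ a : ℝ, 0 ≤ a → ∀ u ∈ F, a • u ∈ F)
    {s : V} {δ : ℝ} (hδ : 0 < δ) (hball : ∀ v : V, n (s - v) < δ → v ∈ F)
    {r : ℝ} (hr : n x < r * δ) : extNorm n F x ≤ 2 * r * n s + n x := by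
  have hr₀ : 0 < r := pos_of_mul_pos_left ((hn_nonneg x).trans_lt hr) hδ.le
  have hn₀ : n 0 = 0 := by simpa using hn_hom 0 0
  have hs : s ∈ F := hball s (by rwa [sub_self, hn₀])
  have hw : s - r⁻¹ • x ∈ F := hball _ <| by
    rwa [sub_sub_cancel, hn_hom, abs_inv, abs_of_pos hr₀, inv_mul_lt_iff₀ hr₀]
  have hnw : n (s - r⁻¹ • x) ≤ n s + r⁻¹ * n x := by
    simpa only [hn_hom, abs_inv, abs_of_pos hr₀] using apply_sub_le_add hn_hom hn_tri s (r⁻¹ • x)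
  calc extNorm n F x ≤ n (r • s) + n (r • (s - r⁻¹ • x)) :=
        extNorm_le_add hn_nonneg (hF_smul r hr₀.le s hs) (hF_smul r hr₀.le _ hw)
          (by rw [smul_sub, smul_inv_smul₀ hr₀.ne']; abel)
    _ ≤ r * n s + r * (n s + r⁻¹ * n x) := by
        rw [hn_hom, hn_hom, abs_of_pos hr₀]; gcongr
    _ = 2 * r * n s + n x := by field_simp; ring

end

theorem extNorm_equiv_general {V : Type*} [AddCommGroup V] [Module ℝ V] (n : V → ℝ) (F : Set V)
    (hn_nonneg : ∀ x, 0 ≤ n x)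
    (hn_hom : ∀ (a : ℝ) (x : V), n (a • x) = |a| * n x)
    (hn_tri : ∀ x y : V, n (x + y) ≤ n x + n y)
    (hF_smul : ∀ a : ℝ, 0 ≤ a → ∀ u ∈ F, a • u ∈ F)
    (hgen : ∀ x : V, ∃ u ∈ F, ∃ v ∈ F, x = u - v)
    (s : V) (δ : ℝ) (hδ : 0 < δ) (hball : ∀ v : V, n (s - v) < δ → v ∈ F) :
    (∀ x : V, n x ≤ extNorm n F x) ∧
    (∀ x : V, extNorm n F x ≤ (2 * n s / δ + 1) * n x) := by
  refine ⟨fun x => le_extNorm (apply_sub_le_add hn_hom hn_tri) (hgen x), fun x => ?_⟩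
  have hlim : Tendsto (fun r => 2 * r * n s + n x) (𝓝[>] (n x / δ))
      (𝓝 ((2 * n s / δ + 1) * n x)) := by
    rw [show (2 * n s / δ + 1) * n x = 2 * (n x / δ) * n s + n x by ring]
    exact ((by fun_prop : Continuous fun r : ℝ => 2 * r * n s + n x).tendsto _).mono_left
      nhdsWithin_le_nhds
  refine ge_of_tendsto hlim (eventually_nhdsWithin_of_forall fun r hr => ?_)
  exact extNorm_le_of_ball_subset hn_nonneg hn_hom hn_tri hF_smul hδ hball
    ((div_lt_iff₀ hδ).mp hr)

/-- If the generating cone `F` has nonempty interior for the norm `n`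
(witnessed by a ball `B_δ(s) ⊆ F`), then `n` and `ñ` are equivalent norms:
`n ≤ ñ` and `ñ(x) ≤ (2 n(s)/δ + 1) n(x)` for all `x`. -/
theorem extNorm_equiv {V : Type*} [AddCommGroup V] [Module ℝ V] (n : V → ℝ) (F : Set V)
    (hn_def : ∀ x, n x = 0 → x = 0) (hn_nonneg : ∀ x, 0 ≤ n x)
    (hn_hom : ∀ (a : ℝ) (x : V), n (a • x) = |a| * n x)
    (hn_tri : ∀ x y : V, n (x + y) ≤ n x + n y)
    (hF_add : ∀ u ∈ F, ∀ v ∈ F, u + v ∈ F)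
    (hF_smul : ∀ a : ℝ, 0 ≤ a → ∀ u ∈ F, a • u ∈ F)
    (hgen : ∀ x : V, ∃ u ∈ F, ∃ v ∈ F, x = u - v)
    (s : V) (δ : ℝ) (hδ : 0 < δ) (hball : ∀ v : V, n (s - v) < δ → v ∈ F) :
    (∀ x : V, n x ≤ extNorm n F x) ∧
    (∀ x : V, extNorm n F x ≤ (2 * n s / δ + 1) * n x) :=
  extNorm_equiv_general n F hn_nonneg hn_hom hn_tri hF_smul hgen s δ hδ hball
end

section
/- Let F be a cone with a finite positively polarizable hyperbolic norm ‖·‖ and induced pairing ⟨v,w⟩ = ½(‖v+w‖² − ‖v‖² − ‖w‖²). Then the reverse Cauchy–Schwarz inequality holds: ⟨v,w⟩ ≥ ‖v‖‖w‖ for all v,w ∈ F, with equality if and only if ‖v+w‖ = ‖v‖ + ‖w‖. -/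
/-- A linear cone over `ℝ`: a commutative cancellative monoid with scalar
multiplication by real numbers, subject to the usual axioms for nonnegative scalars. -/
class RealLinearCone (F : Type*) [AddCancelCommMonoid F] where
  csmul : ℝ → F → F
  csmul_add : ∀ {a : ℝ}, 0 ≤ a → ∀ v w : F, csmul a (v + w) = csmul a v + csmul a w
  add_csmul : ∀ {a b : ℝ}, 0 ≤ a → 0 ≤ b → ∀ v : F, csmul (a + b) v = csmul a v + csmul b v
  mul_csmul : ∀ {a b : ℝ}, 0 ≤ a → 0 ≤ b → ∀ v : F, csmul a (csmul b v) = csmul (a * b) v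
  one_csmul : ∀ v : F, csmul 1 v = v

/-- The pairing induced by a (finite-valued) hyperbolic norm via polarization:
`⟨v,w⟩ = ½(‖v+w‖² - ‖v‖² - ‖w‖²)`. -/
noncomputable def hInner {F : Type*} [AddCancelCommMonoid F] (nn : F → ℝ) (v w : F) : ℝ :=
  ((nn (v + w)) ^ 2 - (nn v) ^ 2 - (nn w) ^ 2) / 2

theorem hInner_eq_mul_add {F : Type*} [AddCancelCommMonoid F] (nn : F → ℝ) (v w : F) :
    hInner nn v w = nn v * nn w + ((nn (v + w)) ^ 2 - (nn v + nn w) ^ 2) / 2 := by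
  unfold hInner
  ring

theorem hInner_reverse_cauchy_schwarz_general {F : Type*} [AddCancelCommMonoid F]
    (nn : F → ℝ)
    (hnonneg : ∀ v : F, 0 ≤ nn v)
    (hrev : ∀ v w : F, nn v + nn w ≤ nn (v + w)) :
    ∀ v w : F, nn v * nn w ≤ hInner nn v w ∧
      (hInner nn v w = nn v * nn w ↔ nn (v + w) = nn v + nn w) := by
  intro v w
  have hsum : 0 ≤ nn v + nn w := add_nonneg (hnonneg v) (hnonneg w)
  have hsq : (nn v + nn w) ^ 2 ≤ nn (v + w) ^ 2 := pow_le_pow_left₀ hsum (hrev v w) 2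
  rw [hInner_eq_mul_add]
  refine ⟨by linarith, ?_⟩
  rw [add_eq_left, div_eq_zero_iff, or_iff_left two_ne_zero, sub_eq_zero,
    pow_left_inj₀ (hnonneg (v + w)) hsum two_ne_zero]

/-- Reverse Cauchy–Schwarz for the pairing induced by a finite positively
polarizable hyperbolic norm: `⟨v,w⟩ ≥ ‖v‖‖w‖`, with equality iff `‖v+w‖ = ‖v‖+‖w‖`. -/
theorem hInner_reverse_cauchy_schwarz {F : Type*} [AddCancelCommMonoid F] [RealLinearCone F]
    (nn : F → ℝ)
    (hproper : ∀ v w : F, v + w = 0 → v = 0)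
    (hnonneg : ∀ v : F, 0 ≤ nn v)
    (hrev : ∀ v w : F, nn v + nn w ≤ nn (v + w))
    (hhom : ∀ a : ℝ, 0 ≤ a → ∀ v : F, nn (RealLinearCone.csmul a v) = a * nn v)
    (hpol : ∀ v w : F, (nn (v + RealLinearCone.csmul 2 w)) ^ 2 + (nn v) ^ 2
      = 2 * (nn (v + w)) ^ 2 + 2 * (nn w) ^ 2) :
    ∀ v w : F, nn v * nn w ≤ hInner nn v w ∧
      (hInner nn v w = nn v * nn w ↔ nn (v + w) = nn v + nn w) :=
  hInner_reverse_cauchy_schwarz_general nn hnonneg hrev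
end

section
/- Let (F, ‖·‖) be a proper, positively polarizable hyperbolically normed cone such that: (i) ‖v‖ < ∞ for all v; (ii) there exists t ∈ F with ‖t‖ > 0; (iii) whenever ‖u+v‖ = ‖u‖+‖v‖ for u,v ∈ F, then u and v are linearly dependent in F. Then the symmetric bilinear form ⟨·,·⟩ induced on span(F) by ‖·‖ is nondegenerate. -/
/-!
An element `x = ι v - ι w` of the radical satisfies `‖v‖² = ⟨v, w⟩ = ‖w‖²`, so
`‖v + w‖² = 4‖v‖² = (‖v‖ + ‖w‖)²`, and strict hyperbolicity makes `v` and `w` proportional,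
say `v = λ w`. Then `(λ - 1) ⟨w, ·⟩ = 0`; if `λ ≠ 1`, `w` is isotropic and orthogonal to a
vector `t` of positive norm, hence `‖w + t‖ = ‖w‖ + ‖t‖`, and strictness again forces `w = 0`.
-/

namespace RealLinearCone

variable {F : Type*} [AddCancelCommMonoid F] [RealLinearCone F]

theorem zero_csmul (v : F) : csmul 0 v = 0 := by
  have h := add_csmul le_rfl le_rfl v
  rw [add_zero] at h
  exact add_eq_left.mp h.symm

theorem csmul_zero {a : ℝ} (ha : 0 ≤ a) : csmul a (0 : F) = 0 := by
  have h := csmul_add ha (0 : F) 0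
  rw [add_zero] at h
  exact add_eq_left.mp h.symm

theorem two_csmul (v : F) : csmul 2 v = v + v := by
  rw [show (2 : ℝ) = 1 + 1 by norm_num, add_csmul zero_le_one zero_le_one, one_csmul]

end RealLinearCone

section

open RealLinearCone

variable {F : Type*} [AddCancelCommMonoid F] {nn : F → ℝ}

theorem hInner_comm (nn : F → ℝ) (v w : F) : hInner nn v w = hInner nn w v := by
  rw [hInner, hInner, add_comm v w]; ring

theorem nn_add_eq_of_hInner_eq_mul (hnonneg : ∀ v : F, 0 ≤ nn v) {v w : F}
    (h : hInner nn v w = nn v * nn w) : nn (v + w) = nn v + nn w := by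
  have hsq : nn (v + w) ^ 2 = (nn v + nn w) ^ 2 := by
    rw [hInner] at h; linear_combination 2 * h
  exact (pow_left_inj₀ (hnonneg _) (add_nonneg (hnonneg v) (hnonneg w)) two_ne_zero).mp hsq

variable [RealLinearCone F]

def IsStrictlyHyperbolic (nn : F → ℝ) : Prop :=
  ∀ u v : F, nn (u + v) = nn u + nn v →
    ∃ lam : ℝ, 0 ≤ lam ∧ (u = csmul lam v ∨ v = csmul lam u)

theorem hInner_self (hhom : ∀ a : ℝ, 0 ≤ a → ∀ v : F, nn (csmul a v) = a * nn v) (v : F) :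
    hInner nn v v = nn v ^ 2 := by
  have h : nn (v + v) = 2 * nn v := by rw [← two_csmul, hhom 2 zero_le_two]
  rw [hInner, h]; ring

theorem eq_zero_of_forall_hInner_eq_zero (hnonneg : ∀ v : F, 0 ≤ nn v)
    (hhom : ∀ a : ℝ, 0 ≤ a → ∀ v : F, nn (csmul a v) = a * nn v)
    (hstrict : IsStrictlyHyperbolic nn) {t : F} (ht : 0 < nn t) {u : F}
    (hu : ∀ w, hInner nn u w = 0) : u = 0 := by
  have hu0 : nn u = 0 := by
    have h := hu u
    rwa [hInner_self hhom, sq_eq_zero_iff] at h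
  have hadd : nn (u + t) = nn u + nn t :=
    nn_add_eq_of_hInner_eq_mul hnonneg (by rw [hu t, hu0, zero_mul])
  obtain ⟨lam, hlam, h | h⟩ := hstrict u t hadd
  · have hlam_t : lam * nn t = 0 := by rw [← hhom lam hlam, ← h, hu0]
    rw [h, (mul_eq_zero.mp hlam_t).resolve_right ht.ne', zero_csmul]
  · have ht0 : nn t = 0 := by rw [h, hhom lam hlam, hu0, mul_zero]
    exact absurd ht0 ht.ne'

theorem exists_csmul_of_hInner_eq (hnonneg : ∀ v : F, 0 ≤ nn v)
    (hhom : ∀ a : ℝ, 0 ≤ a → ∀ v : F, nn (csmul a v) = a * nn v)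
    (hstrict : IsStrictlyHyperbolic nn) {v w : F}
    (hv : hInner nn v v = hInner nn w v) (hw : hInner nn v w = hInner nn w w) :
    ∃ lam : ℝ, 0 ≤ lam ∧ (v = csmul lam w ∨ w = csmul lam v) := by
  rw [hInner_self hhom] at hv hw
  have hvw : nn v = nn w :=
    (pow_left_inj₀ (hnonneg v) (hnonneg w) two_ne_zero).mp
      (hv.trans ((hInner_comm nn w v).trans hw))
  exact hstrict v w (nn_add_eq_of_hInner_eq_mul hnonneg (by rw [hw, hvw, sq]))

theorem map_eq_of_eq_csmul_of_forall_apply_eq {V : Type*} [AddCommGroup V] [Module ℝ V]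
    {ι : F → V} {B : V →ₗ[ℝ] V →ₗ[ℝ] ℝ} (hnonneg : ∀ v : F, 0 ≤ nn v)
    (hhom : ∀ a : ℝ, 0 ≤ a → ∀ v : F, nn (csmul a v) = a * nn v)
    (hstrict : IsStrictlyHyperbolic nn) {t : F} (ht : 0 < nn t)
    (hι_smul : ∀ a : ℝ, 0 ≤ a → ∀ v : F, ι (csmul a v) = a • ι v)
    (hext : ∀ v w : F, B (ι v) (ι w) = hInner nn v w)
    {lam : ℝ} (hlam : 0 ≤ lam) {p q : F} (hpq : p = csmul lam q)
    (hB : ∀ y : V, B (ι p) y = B (ι q) y) : ι p = ι q := by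
  by_cases h1 : lam = 1
  · rw [hpq, h1, one_csmul]
  have hq : q = 0 := by
    refine eq_zero_of_forall_hInner_eq_zero hnonneg hhom hstrict ht fun w => ?_
    have h := hB (ι w)
    rw [hpq, hι_smul lam hlam, map_smul, LinearMap.smul_apply, smul_eq_mul, hext] at h
    by_contra hw
    exact h1 ((mul_eq_right₀ hw).mp h)
  rw [hpq, hq, csmul_zero hlam]

end

theorem hInner_span_nondegenerate_general {F : Type*} [AddCancelCommMonoid F] [RealLinearCone F]
    (nn : F → ℝ)
    (hnonneg : ∀ v : F, 0 ≤ nn v)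
    (hhom : ∀ a : ℝ, 0 ≤ a → ∀ v : F, nn (RealLinearCone.csmul a v) = a * nn v)
    (hnontrivial : ∃ t : F, 0 < nn t)
    (hstrict : ∀ u v : F, nn (u + v) = nn u + nn v →
      ∃ lam : ℝ, 0 ≤ lam ∧ (u = RealLinearCone.csmul lam v ∨ v = RealLinearCone.csmul lam u))
    {V : Type*} [AddCommGroup V] [Module ℝ V] (ι : F → V)
    (hι_smul : ∀ a : ℝ, 0 ≤ a → ∀ v : F, ι (RealLinearCone.csmul a v) = a • ι v)
    (hgen : ∀ x : V, ∃ v w : F, x = ι v - ι w)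
    (B : V →ₗ[ℝ] V →ₗ[ℝ] ℝ)
    (hext : ∀ v w : F, B (ι v) (ι w) = hInner nn v w) :
    ∀ x : V, (∀ y : V, B x y = 0) → x = 0 := by
  intro x hx
  obtain ⟨v, w, rfl⟩ := hgen x
  have hvw : ∀ y : V, B (ι v) y = B (ι w) y := fun y => by
    rw [← sub_eq_zero, ← LinearMap.sub_apply, ← map_sub]; exact hx y
  obtain ⟨t, ht⟩ := hnontrivial
  obtain ⟨lam, hlam, h | h⟩ := exists_csmul_of_hInner_eq (v := v) (w := w) hnonneg hhom hstrict
    (by rw [← hext v v, ← hext w v, hvw]) (by rw [← hext v w, ← hext w w, hvw])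
  · rw [map_eq_of_eq_csmul_of_forall_apply_eq hnonneg hhom hstrict ht hι_smul hext hlam h hvw,
      sub_self]
  · rw [map_eq_of_eq_csmul_of_forall_apply_eq hnonneg hhom hstrict ht hι_smul hext hlam h
      (fun y => (hvw y).symm), sub_self]

/-- If the hyperbolic norm on a proper cone `F` is finite, positively
polarizable, non-trivial and strictly hyperbolic, then the symmetric bilinear form `B`
on the span `V` of `F` which extends the induced pairing is nondegenerate.
Here `(V, ι, B)` is an abstract presentation of the span: `ι` is additive, compatible
with nonnegative scalar multiplication, injective, and its image generates `V`. -/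
theorem hInner_span_nondegenerate {F : Type*} [AddCancelCommMonoid F] [RealLinearCone F]
    (nn : F → ℝ)
    (hproper : ∀ v w : F, v + w = 0 → v = 0)
    (hnonneg : ∀ v : F, 0 ≤ nn v)
    (hrev : ∀ v w : F, nn v + nn w ≤ nn (v + w))
    (hhom : ∀ a : ℝ, 0 ≤ a → ∀ v : F, nn (RealLinearCone.csmul a v) = a * nn v)
    (hpol : ∀ v w : F, (nn (v + RealLinearCone.csmul 2 w)) ^ 2 + (nn v) ^ 2
      = 2 * (nn (v + w)) ^ 2 + 2 * (nn w) ^ 2)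
    (hnontrivial : ∃ t : F, 0 < nn t)
    (hstrict : ∀ u v : F, nn (u + v) = nn u + nn v →
      ∃ lam : ℝ, 0 ≤ lam ∧ (u = RealLinearCone.csmul lam v ∨ v = RealLinearCone.csmul lam u))
    {V : Type*} [AddCommGroup V] [Module ℝ V] (ι : F → V)
    (hι_inj : Function.Injective ι)
    (hι_add : ∀ v w : F, ι (v + w) = ι v + ι w)
    (hι_smul : ∀ a : ℝ, 0 ≤ a → ∀ v : F, ι (RealLinearCone.csmul a v) = a • ι v)
    (hgen : ∀ x : V, ∃ v w : F, x = ι v - ι w)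
    (B : V →ₗ[ℝ] V →ₗ[ℝ] ℝ)
    (hsymm : ∀ x y : V, B x y = B y x)
    (hext : ∀ v w : F, B (ι v) (ι w) = hInner nn v w) :
    ∀ x : V, (∀ y : V, B x y = 0) → x = 0 :=
  hInner_span_nondegenerate_general nn hnonneg hhom hnontrivial hstrict ι hι_smul hgen B hext
end

section
/- Let V be a Lorentzian vector space and t ∈ V with ⟨t,t⟩ > 0. Then for all u, v in the causal future cone C_t⁺(V) = {x : ⟨x,x⟩ ≥ 0, ⟨x,t⟩ ≥ 0}, the reverse Cauchy–Schwarz inequality ⟨u,v⟩ ≥ √⟨u,u⟩ · √⟨v,v⟩ holds. -/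
/-!
Normalise `t` to `e` with `B e e = 1` and split every vector as `x = B x e • e + x'` with
`B e x' = 0`. A plane spanned by `e` and `x'` meets the negative definite part `V₂`, because `V₁`
is a line; hence `B` is negative semidefinite on `e`'s orthogonal complement and satisfies the
Cauchy–Schwarz inequality there. With `a = B u e`, `s² = -B u' u'` (and `b`, `σ` for `v`) the
claim reduces to `√(a² - s²) √(b² - σ²) ≤ ab - sσ` for `0 ≤ s ≤ a`, `0 ≤ σ ≤ b`, whose
squared form is `(aσ - bs)² ≥ 0`.
-/

/-- A symmetric bilinear form `B` on a real vector space `V` is Lorentzian if `V`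
decomposes as a direct sum of a one-dimensional subspace on which `B` is positive
definite and a complement on which `B` is negative definite. -/
def IsLorentzian {V : Type*} [AddCommGroup V] [Module ℝ V] (B : V →ₗ[ℝ] V →ₗ[ℝ] ℝ) : Prop :=
  ∃ V₁ V₂ : Submodule ℝ V, IsCompl V₁ V₂ ∧ Module.finrank ℝ V₁ = 1 ∧
    (∀ x ∈ V₁, x ≠ 0 → 0 < B x x) ∧ (∀ x ∈ V₂, x ≠ 0 → B x x < 0)

theorem Submodule.exists_smul_add_smul_mem_of_finrank_eq_one {K V : Type*} [Field K]
    [AddCommGroup V] [Module K V] {V₁ V₂ : Submodule K V} (h : IsCompl V₁ V₂)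
    (hV₁ : Module.finrank K V₁ = 1) (x y : V) :
    ∃ a b : K, (a ≠ 0 ∨ b ≠ 0) ∧ a • x + b • y ∈ V₂ := by
  have : Module.Finite K V₁ := Module.finite_of_finrank_eq_succ hV₁
  obtain ⟨g, hg⟩ := finrank_le_one_iff.mp hV₁.le
  obtain ⟨c, hc⟩ := hg (V₁.projectionOnto V₂ h x)
  obtain ⟨d, hd⟩ := hg (V₁.projectionOnto V₂ h y)
  by_cases hcd : c = 0 ∧ d = 0
  · refine ⟨1, 0, Or.inl one_ne_zero, ?_⟩
    rw [one_smul, zero_smul, add_zero, ← projectionOnto_apply_eq_zero_iff h, ← hc,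
      hcd.1, zero_smul]
  · refine ⟨d, -c, by rw [neg_ne_zero]; tauto, ?_⟩
    rw [← projectionOnto_apply_eq_zero_iff h, map_add, map_smul, map_smul, ← hc, ← hd,
      smul_smul, smul_smul, mul_comm, neg_mul, neg_smul, add_neg_cancel]

theorem IsLorentzian.apply_self_nonpos_of_apply_eq_zero {V : Type*} [AddCommGroup V]
    [Module ℝ V] {B : V →ₗ[ℝ] V →ₗ[ℝ] ℝ} (hL : IsLorentzian B) (hB : ∀ x y, B x y = B y x)
    {t w : V} (ht : 0 < B t t) (htw : B t w = 0) : B w w ≤ 0 := by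
  obtain ⟨V₁, V₂, hcompl, hrank, -, hV₂⟩ := hL
  obtain ⟨a, b, hab, hz⟩ := Submodule.exists_smul_add_smul_mem_of_finrank_eq_one hcompl hrank t w
  have hz_nonpos : B (a • t + b • w) (a • t + b • w) ≤ 0 := by
    rcases eq_or_ne (a • t + b • w) 0 with h0 | h0
    · simp [h0]
    · exact (hV₂ _ hz h0).le
  have hz_eq : B (a • t + b • w) (a • t + b • w) = a ^ 2 * B t t + b ^ 2 * B w w := by
    simp only [map_add, map_smul, LinearMap.add_apply, LinearMap.smul_apply, smul_eq_mul]
    rw [hB w t, htw]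
    ring
  by_contra! hw
  have hz_pos : 0 < a ^ 2 * B t t + b ^ 2 * B w w := by
    rcases hab with ha | hb
    · nlinarith [sq_pos_of_ne_zero ha, sq_nonneg b]
    · nlinarith [sq_pos_of_ne_zero hb, sq_nonneg a]
  linarith

namespace LinearMap.BilinForm

variable {R M : Type*} [CommRing R] [AddCommGroup M] [Module R M] {B : M →ₗ[R] M →ₗ[R] R}

theorem apply_eq_mul_add_apply_sub_smul (hB : ∀ x y, B x y = B y x) {e : M} (he : B e e = 1)
    (x y : M) : B x y = B x e * B y e + B (x - B x e • e) (y - B y e • e) := by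
  simp only [map_sub, map_smul, LinearMap.sub_apply, LinearMap.smul_apply, smul_eq_mul, he]
  rw [hB e y]
  ring

theorem apply_sub_smul_eq_zero (hB : ∀ x y, B x y = B y x) {e : M} (he : B e e = 1) (x : M) :
    B e (x - B x e • e) = 0 := by
  simp [he, hB e x]

theorem sq_apply_le_of_apply_self_nonpos [LinearOrder R] [IsStrictOrderedRing R]
    (hB : ∀ x y, B x y = B y x) {S : Submodule R M} (hS : ∀ w ∈ S, B w w ≤ 0) {x y : M}
    (hx : x ∈ S) (hy : y ∈ S) : B x y ^ 2 ≤ B x x * B y y := by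
  simpa [sq, hB y x] using apply_mul_apply_le_of_forall_zero_le
    (-B.compl₁₂ S.subtype S.subtype) (fun w => neg_nonneg.mpr (hS w w.2)) ⟨x, hx⟩ ⟨y, hy⟩

end LinearMap.BilinForm

theorem Real.sqrt_add_mul_sqrt_add_le {a b p q r : ℝ} (ha : 0 ≤ a) (hb : 0 ≤ b) (hp : p ≤ 0)
    (hq : q ≤ 0) (hap : 0 ≤ a * a + p) (hbq : 0 ≤ b * b + q) (hr : r ^ 2 ≤ p * q) :
    √(a * a + p) * √(b * b + q) ≤ a * b + r := by
  obtain ⟨s, hs, rfl⟩ : ∃ s, 0 ≤ s ∧ p = -(s * s) := ⟨√(-p), Real.sqrt_nonneg _, by simp [hp]⟩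
  obtain ⟨σ, hσ, rfl⟩ : ∃ σ, 0 ≤ σ ∧ q = -(σ * σ) := ⟨√(-q), Real.sqrt_nonneg _, by simp [hq]⟩
  have hsa : s ≤ a := mul_self_le_mul_self_iff hs ha |>.mpr (by linarith)
  have hσb : σ ≤ b := mul_self_le_mul_self_iff hσ hb |>.mpr (by linarith)
  have hr' : -(s * σ) ≤ r := (abs_le_of_sq_le_sq' (by linarith) (by positivity)).1
  calc √(a * a + -(s * s)) * √(b * b + -(σ * σ))
      = √((a * a - s * s) * (b * b - σ * σ)) := by rw [← Real.sqrt_mul (by linarith)]; ring_nf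
    _ ≤ a * b - s * σ := by
        rw [Real.sqrt_le_left (by nlinarith [mul_le_mul hsa hσb hσ ha])]
        nlinarith [sq_nonneg (a * σ - b * s)]
    _ ≤ a * b + r := by linarith

/-- Reverse Cauchy–Schwarz inequality on the causal future cone
`C_t⁺(V) = {x : B x x ≥ 0, B x t ≥ 0}` of a Lorentzian vector space. -/
theorem lorentz_reverse_cauchy_schwarz {V : Type*} [AddCommGroup V] [Module ℝ V]
    (B : V →ₗ[ℝ] V →ₗ[ℝ] ℝ) (hsymm : ∀ x y : V, B x y = B y x)
    (hL : IsLorentzian B) (t : V) (ht : 0 < B t t)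
    (u v : V) (hu_causal : 0 ≤ B u u) (hu_future : 0 ≤ B u t)
    (hv_causal : 0 ≤ B v v) (hv_future : 0 ≤ B v t) :
    Real.sqrt (B u u) * Real.sqrt (B v v) ≤ B u v := by
  open LinearMap.BilinForm in
  set e := (√(B t t))⁻¹ • t
  have he : B e e = 1 := by
    simp only [e, map_smul, LinearMap.smul_apply, smul_eq_mul, ← mul_assoc, ← mul_inv,
      Real.mul_self_sqrt ht.le, inv_mul_cancel₀ ht.ne']
  have hfuture (x : V) (hx : 0 ≤ B x t) : 0 ≤ B x e := by
    simp only [e, map_smul, smul_eq_mul]; positivity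
  have hperp (w : V) (hw : w ∈ LinearMap.ker (B e)) : B w w ≤ 0 :=
    hL.apply_self_nonpos_of_apply_eq_zero hsymm (he ▸ one_pos) hw
  have hperp_mem (x : V) : x - B x e • e ∈ LinearMap.ker (B e) :=
    apply_sub_smul_eq_zero hsymm he x
  have hdecomp := apply_eq_mul_add_apply_sub_smul hsymm he
  rw [hdecomp u u] at hu_causal ⊢
  rw [hdecomp v v] at hv_causal ⊢
  rw [hdecomp u v]
  exact Real.sqrt_add_mul_sqrt_add_le (hfuture u hu_future) (hfuture v hv_future)
    (hperp _ (hperp_mem u)) (hperp _ (hperp_mem v)) hu_causal hv_causal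
    (sq_apply_le_of_apply_self_nonpos hsymm hperp (hperp_mem u) (hperp_mem v))
end

section
/- Let V be a real vector space with a symmetric bilinear form ⟨·,·⟩, and suppose there exists t ∈ V with ⟨t,t⟩ > 0 such that the future set C_t⁺(V) = {v : ⟨v,v⟩ ≥ 0, ⟨v,t⟩ ≥ 0} is proper, i.e., C_t⁺(V) ∩ (−C_t⁺(V)) = {0}. Then ⟨·,·⟩ is Lorentzian: V = ℝt ⊕ (ℝt)⊥ with ⟨·,·⟩ positive definite on ℝt and negative definite on (ℝt)⊥. -/
/-- If the future set `C_t⁺(V) = {v : B v v ≥ 0, B v t ≥ 0}` of a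
symmetric bilinear form `B` (with `B t t > 0`) is proper, then `B` is Lorentzian:
`V = ℝt ⊕ (ℝt)⊥` with `B` positive definite on `ℝt` and negative definite on
`(ℝt)⊥ = ker (B.flip t)`. -/
theorem proper_future_implies_lorentzian {V : Type*} [AddCommGroup V] [Module ℝ V]
    (B : V →ₗ[ℝ] V →ₗ[ℝ] ℝ) (hsymm : ∀ x y : V, B x y = B y x)
    (t : V) (ht : 0 < B t t)
    (hproper : ∀ v : V, (0 ≤ B v v ∧ 0 ≤ B v t) → (0 ≤ B (-v) (-v) ∧ 0 ≤ B (-v) t) → v = 0) :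
    IsLorentzian B ∧
      IsCompl (Submodule.span ℝ {t}) (LinearMap.ker (B.flip t)) ∧
      (∀ x ∈ Submodule.span ℝ {t}, x ≠ 0 → 0 < B x x) ∧
      (∀ w : V, B w t = 0 → w ≠ 0 → B w w < 0) := by
  -- negative on kernel
  have hneg : ∀ w : V, B w t = 0 → w ≠ 0 → B w w < 0 := by
    intro w hw hw0
    by_contra h
    push_neg at h
    exact hw0 (hproper w ⟨h, hw.ge⟩ (by simp [hw, h]))
  have ht0 : t ≠ 0 := by rintro rfl; simp at ht
  -- positive on span
  have hpos : ∀ x ∈ Submodule.span ℝ {t}, x ≠ 0 → 0 < B x x := by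
    intro x hx hx0
    obtain ⟨c, rfl⟩ := Submodule.mem_span_singleton.mp hx
    have hc : c ≠ 0 := by rintro rfl; simp at hx0
    have : B (c • t) (c • t) = c * c * B t t := by simp; ring
    rw [this]
    exact mul_pos (mul_self_pos.mpr hc) ht
  -- compl
  have hcompl : IsCompl (Submodule.span ℝ {t}) (LinearMap.ker (B.flip t)) := by
    constructor
    · rw [Submodule.disjoint_def]
      intro x hx hxk
      obtain ⟨c, rfl⟩ := Submodule.mem_span_singleton.mp hx
      have : B (c • t) t = 0 := hxk
      simp only [map_smul, LinearMap.smul_apply, smul_eq_mul] at this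
      rcases mul_eq_zero.mp this with h | h
      · simp [h]
      · exact absurd h ht.ne'
    · rw [codisjoint_iff, eq_top_iff]
      intro v _
      have hmem : v - (B v t / B t t) • t ∈ LinearMap.ker (B.flip t) := by
        simp only [LinearMap.mem_ker, LinearMap.flip_apply, map_sub, map_smul, smul_eq_mul]
        field_simp
        simp
      have : v = (B v t / B t t) • t + (v - (B v t / B t t) • t) := by abel
      rw [this]
      exact Submodule.add_mem_sup (Submodule.mem_span_singleton.mpr ⟨_, rfl⟩) hmem
  refine ⟨⟨Submodule.span ℝ {t}, LinearMap.ker (B.flip t), hcompl, ?_, hpos, ?_⟩, hcompl, hpos, hneg⟩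
  · exact finrank_span_singleton ht0
  · intro x hx hx0
    exact hneg x hx hx0
end

section
/- Let V be a Lorentzian vector space that is complete with respect to the Wick-rotated norm n coming from a Lorentz decomposition V = ℝt ⊕ W (a Lorentz–Hilbert space), and let F ⊆ C_t⁺(V) be a generating linear cone with V = span(F). Then V is sequentially forward complete for the order x ≤ y iff y − x ∈ F: every nondecreasing sequence (v_k) bounded above by some y ∈ V converges in the n-norm topology. -/
open scoped RealInnerProductSpace

/-!
Write `f x = ⟪x, t⟫` for the time coordinate. On the future cone `f` is nonnegative and, since
`B x x ≥ 0` means `‖x‖² ≤ 2 f(x)²`, it dominates the norm: `‖x‖ ≤ √2 f(x)`. Along a sequence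
increasing for the cone order, the increments therefore have norms bounded by the increments of
the real sequence `√2 f(v k)`, which is bounded above by `√2 f(y)`. So `v` has bounded variation,
hence is Cauchy, and converges by completeness.
-/

theorem cauchySeq_of_dist_succ_le_sub_of_le {X : Type*} [PseudoMetricSpace X] {v : ℕ → X}
    {f : ℕ → ℝ} {M : ℝ} (hbdd : ∀ n, f n ≤ M)
    (hdist : ∀ n, dist (v n) (v (n + 1)) ≤ f (n + 1) - f n) : CauchySeq v := by
  have hinc : ∀ n, 0 ≤ f (n + 1) - f n := fun n => dist_nonneg.trans (hdist n)
  refine cauchySeq_of_dist_le_of_summable _ hdist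
    (summable_of_sum_range_le (c := M - f 0) hinc fun n => ?_)
  rw [Finset.sum_range_sub (fun k => f k)]
  linarith [hbdd n]

theorem norm_le_sqrt_two_mul_inner {V : Type*} [NormedAddCommGroup V] [InnerProductSpace ℝ V]
    {x t : V} (hxt : 0 ≤ ⟪x, t⟫) (hx : ⟪x, x⟫ ≤ 2 * ⟪x, t⟫ ^ 2) : ‖x‖ ≤ √2 * ⟪x, t⟫ := by
  calc ‖x‖ = √⟪x, x⟫ := norm_eq_sqrt_real_inner x
    _ ≤ √(2 * ⟪x, t⟫ ^ 2) := Real.sqrt_le_sqrt hx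
    _ = √2 * ⟪x, t⟫ := by rw [Real.sqrt_mul zero_le_two, Real.sqrt_sq hxt]

theorem lorentz_hilbert_forward_complete_general {V : Type*} [NormedAddCommGroup V]
    [InnerProductSpace ℝ V] [CompleteSpace V]
    (t : V) (ht : ⟪t, t⟫ = 1)
    (B : V → V → ℝ) (hB : ∀ x y : V, B x y = 2 * ⟪x, t⟫ * ⟪y, t⟫ - ⟪x, y⟫)
    (F : Set V)
    (hF_future : ∀ x ∈ F, 0 ≤ B x x ∧ 0 ≤ B x t)
    (v : ℕ → V) (y : V)
    (hmono : ∀ k : ℕ, v (k + 1) - v k ∈ F)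
    (hbdd : ∀ k : ℕ, y - v k ∈ F) :
    ∃ L : V, Filter.Tendsto v Filter.atTop (nhds L) := by
  have htime_nonneg : ∀ x ∈ F, 0 ≤ ⟪x, t⟫ := fun x hx => by
    have h := (hF_future x hx).2
    rw [hB, ht] at h
    linarith
  have hnorm_le : ∀ x ∈ F, ‖x‖ ≤ √2 * ⟪x, t⟫ := fun x hx => by
    have h := (hF_future x hx).1
    rw [hB] at h
    exact norm_le_sqrt_two_mul_inner (htime_nonneg x hx) (by linarith)
  have hcauchy : CauchySeq v := by
    refine cauchySeq_of_dist_succ_le_sub_of_le (f := fun k => √2 * ⟪v k, t⟫)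
      (M := √2 * ⟪y, t⟫) (fun k => ?_) (fun k => ?_)
    · have h := htime_nonneg _ (hbdd k)
      rw [inner_sub_left] at h
      gcongr
      linarith
    · rw [dist_comm, dist_eq_norm, ← mul_sub, ← inner_sub_left]
      exact hnorm_le _ (hmono k)
  exact cauchySeq_tendsto_of_complete hcauchy

/-- Let `V` be a Lorentz–Hilbert space: a real Hilbert space (the inner
product `⟪·,·⟫` being the Wick rotation associated to `t`, `⟪t,t⟫ = 1`) whose
Lorentzian form is `B x y = 2⟪x,t⟫⟪y,t⟫ - ⟪x,y⟫`. If `F ⊆ C_t⁺(V)` is a generating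
linear cone contained in the causal future, then `V` is sequentially forward complete
for the order `x ≤ y ↔ y - x ∈ F`: every nondecreasing sequence bounded above
converges. -/
theorem lorentz_hilbert_forward_complete {V : Type*} [NormedAddCommGroup V]
    [InnerProductSpace ℝ V] [CompleteSpace V]
    (t : V) (ht : ⟪t, t⟫ = 1)
    (B : V → V → ℝ) (hB : ∀ x y : V, B x y = 2 * ⟪x, t⟫ * ⟪y, t⟫ - ⟪x, y⟫)
    (F : Set V)
    (hF_future : ∀ x ∈ F, 0 ≤ B x x ∧ 0 ≤ B x t)
    (hF_add : ∀ x ∈ F, ∀ y ∈ F, x + y ∈ F)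
    (hF_smul : ∀ a : ℝ, 0 ≤ a → ∀ x ∈ F, a • x ∈ F)
    (hgen : ∀ x : V, ∃ u ∈ F, ∃ v ∈ F, x = u - v)
    (v : ℕ → V) (y : V)
    (hmono : ∀ k : ℕ, v (k + 1) - v k ∈ F)
    (hbdd : ∀ k : ℕ, y - v k ∈ F) :
    ∃ L : V, Filter.Tendsto v Filter.atTop (nhds L) :=
  lorentz_hilbert_forward_complete_general t ht B hB F hF_future v y hmono hbdd
end
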